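/- Let b be a connected locally finite graph over (X,m), S > 0, and define ρ'_S(x,y) := sup{ρ(x,y) : ρ is an intrinsic pseudo-metric with jump size at most S such that every ball {z : ρ(w,z) ≤ r} (w ∈ X, r ≥ 0) is a finite set}. Then √2 · ρ'_S(x,y) ≤ ρ_ℰ(x,y) for all x, y ∈ X. -/
import Mathlib


noncomputable section

/-- A pseudo-metric on the vertex set. -/
def IsPseudoMetric {X : Type*} (ρ : X → X → ℝ) : Prop :=
  (∀ x, ρ x x = 0) ∧ (∀ x y, 0 ≤ ρ x y) ∧ (∀ x y, ρ x y = ρ y x) ∧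
    ∀ x y z, ρ x z ≤ ρ x y + ρ y z

/-- A pseudo-metric `ρ` is intrinsic if `Σ_y b(x,y) ρ(x,y)² ≤ m(x)` for all `x`. -/
def IsIntrinsic {X : Type*} (b : X → X → ℝ) (m : X → ℝ) (ρ : X → X → ℝ) : Prop :=
  ∀ x, ∑' y, b x y * ρ x y ^ 2 ≤ m x

/-- The jump size of `ρ` is at most `S`. -/
def JumpLE {X : Type*} (b : X → X → ℝ) (ρ : X → X → ℝ) (S : ℝ) : Prop :=
  ∀ x y, 0 < b x y → ρ x y ≤ S

/-- All balls of `ρ` are finite sets. -/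
def FiniteBalls {X : Type*} (ρ : X → X → ℝ) : Prop :=
  ∀ (w : X) (r : ℝ), 0 ≤ r → {z | ρ w z ≤ r}.Finite

/-- The energy density `Γ(f)(x) = (1/(2m(x))) Σ_y b(x,y)(f(x) − f(y))²`. -/
def gammaDensity {X : Type*} (b : X → X → ℝ) (m : X → ℝ) (f : X → ℝ) (x : X) : ℝ :=
  (2 * m x)⁻¹ * ∑' y, b x y * (f x - f y) ^ 2

/-- `ρ_ℰ(x,y) = sup{|ψ(x) − ψ(y)| : ψ finitely supported, ‖Γ(ψ)‖_∞ ≤ 1}`. -/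
def rhoE {X : Type*} (b : X → X → ℝ) (m : X → ℝ) (x y : X) : ℝ :=
  sSup {r | ∃ ψ : X → ℝ, (Function.support ψ).Finite ∧ (∀ z, gammaDensity b m ψ z ≤ 1) ∧
    r = |ψ x - ψ y|}

/-- `ρ'_S(x,y)`: supremum of `ρ(x,y)` over all intrinsic pseudo-metrics with finite balls and
jump size at most `S`. -/
def rhoSFin {X : Type*} (b : X → X → ℝ) (m : X → ℝ) (S : ℝ) (x y : X) : ℝ :=
  sSup {r | ∃ ρ : X → X → ℝ, IsPseudoMetric ρ ∧ IsIntrinsic b m ρ ∧ JumpLE b ρ S ∧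
    FiniteBalls ρ ∧ r = ρ x y}


lemma aux_summable {X : Type*} (f : X → ℝ) (h : (Function.support f).Finite) :
    Summable f := by
  apply summable_of_ne_finset_zero (s := h.toFinset)
  intro x hx
  by_contra hfx
  exact hx (h.mem_toFinset.mpr hfx)

lemma edge_bound {X : Type*} (b : X → X → ℝ) (m : X → ℝ)
    (hb_nonneg : ∀ x y, 0 ≤ b x y) (hlf : ∀ x, (Function.support (b x)).Finite)
    (hm_pos : ∀ x, 0 < m x) (ψ : X → ℝ) (hψ : ∀ z, gammaDensity b m ψ z ≤ 1)
    {u v : X} (huv : 0 < b u v) :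
    |ψ u - ψ v| ≤ Real.sqrt (2 * m u / b u v) := by
  have hsum : Summable (fun w => b u w * (ψ u - ψ w) ^ 2) := by
    apply aux_summable
    apply (hlf u).subset
    intro w hw
    simp only [Function.mem_support] at hw ⊢
    intro h0; apply hw; rw [h0]; ring
  have hterm : b u v * (ψ u - ψ v) ^ 2 ≤ ∑' w, b u w * (ψ u - ψ w) ^ 2 :=
    Summable.le_tsum hsum v (fun w _ => mul_nonneg (hb_nonneg u w) (sq_nonneg _))
  have h2m : (0:ℝ) < 2 * m u := by have := hm_pos u; linarith
  have hT : ∑' w, b u w * (ψ u - ψ w) ^ 2 ≤ 2 * m u := by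
    have h1 := hψ u
    unfold gammaDensity at h1
    have h3 := mul_le_mul_of_nonneg_left h1 h2m.le
    rwa [← mul_assoc, mul_inv_cancel₀ h2m.ne', one_mul, mul_one] at h3
  have hsq : (ψ u - ψ v) ^ 2 ≤ 2 * m u / b u v := by
    rw [le_div_iff₀ huv]; nlinarith
  calc |ψ u - ψ v| = Real.sqrt ((ψ u - ψ v) ^ 2) := (Real.sqrt_sq_eq_abs _).symm
    _ ≤ Real.sqrt (2 * m u / b u v) := Real.sqrt_le_sqrt hsq

lemma rhoE_bdd {X : Type*} (b : X → X → ℝ) (m : X → ℝ)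
    (hb_nonneg : ∀ x y, 0 ≤ b x y) (hlf : ∀ x, (Function.support (b x)).Finite)
    (hm_pos : ∀ x, 0 < m x) {x y : X}
    (hxy : Relation.ReflTransGen (fun u v => 0 < b u v) x y) :
    ∃ C : ℝ, ∀ ψ : X → ℝ, (∀ z, gammaDensity b m ψ z ≤ 1) → |ψ x - ψ y| ≤ C := by
  induction hxy with
  | refl => exact ⟨0, fun ψ _ => by simp⟩
  | @tail c d hxc hcd ih =>
    obtain ⟨C, hC⟩ := ih
    refine ⟨C + Real.sqrt (2 * m c / b c d), fun ψ hψ => ?_⟩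
    calc |ψ x - ψ d| ≤ |ψ x - ψ c| + |ψ c - ψ d| := abs_sub_le _ _ _
      _ ≤ C + Real.sqrt (2 * m c / b c d) :=
          add_le_add (hC ψ hψ) (edge_bound b m hb_nonneg hlf hm_pos ψ hψ hcd)

lemma mem_rhoE_set {X : Type*} (b : X → X → ℝ) (m : X → ℝ)
    (hb_nonneg : ∀ x y, 0 ≤ b x y) (hlf : ∀ x, (Function.support (b x)).Finite)
    (hm_pos : ∀ x, 0 < m x)
    (ρ : X → X → ℝ) (hρ : IsPseudoMetric ρ) (hint : IsIntrinsic b m ρ)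
    (hfb : FiniteBalls ρ) (x y : X) :
    ∃ ψ : X → ℝ, (Function.support ψ).Finite ∧ (∀ z, gammaDensity b m ψ z ≤ 1) ∧
      Real.sqrt 2 * ρ x y = |ψ x - ψ y| := by
  obtain ⟨hρ0, hρnn, hρsymm, hρtri⟩ := hρ
  set ψ : X → ℝ := fun z => Real.sqrt 2 * max (ρ x y - ρ x z) 0 with hψdef
  have hsupp : (Function.support ψ).Finite := by
    apply (hfb x (ρ x y) (hρnn x y)).subset
    intro z hz
    simp only [Function.mem_support, hψdef] at hz
    by_contra h
    simp only [Set.mem_setOf_eq, not_le] at h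
    apply hz
    have : ρ x y - ρ x z ≤ 0 := by linarith
    rw [max_eq_right this, mul_zero]
  have hlip : ∀ u v, |ψ u - ψ v| ≤ Real.sqrt 2 * ρ u v := by
    intro u v
    have h1 : |max (ρ x y - ρ x u) 0 - max (ρ x y - ρ x v) 0| ≤
        |(ρ x y - ρ x u) - (ρ x y - ρ x v)| := abs_max_sub_max_le_abs _ _ _
    have h2 : |(ρ x y - ρ x u) - (ρ x y - ρ x v)| ≤ ρ u v := by
      rw [abs_sub_le_iff]
      constructor
      · have := hρtri x u v; have := hρsymm u v; linarith
      · have := hρtri x v u; have := hρsymm u v; linarith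
    have hs2 : (0:ℝ) ≤ Real.sqrt 2 := Real.sqrt_nonneg 2
    calc |ψ u - ψ v| = Real.sqrt 2 * |max (ρ x y - ρ x u) 0 - max (ρ x y - ρ x v) 0| := by
          rw [hψdef]; rw [← mul_sub, abs_mul, abs_of_nonneg hs2]
      _ ≤ Real.sqrt 2 * ρ u v := by
          apply mul_le_mul_of_nonneg_left _ hs2
          exact h1.trans h2
  have hgamma : ∀ z, gammaDensity b m ψ z ≤ 1 := by
    intro z
    unfold gammaDensity
    have hsum1 : Summable (fun w => b z w * (ψ z - ψ w) ^ 2) := by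
      apply aux_summable
      apply (hlf z).subset
      intro w hw
      simp only [Function.mem_support] at hw ⊢
      intro h0; apply hw; rw [h0]; ring
    have hsum2 : Summable (fun w => b z w * (2 * ρ z w ^ 2)) := by
      apply aux_summable
      apply (hlf z).subset
      intro w hw
      simp only [Function.mem_support] at hw ⊢
      intro h0; apply hw; rw [h0]; ring
    have hle : ∑' w, b z w * (ψ z - ψ w) ^ 2 ≤ ∑' w, b z w * (2 * ρ z w ^ 2) := by
      apply Summable.tsum_le_tsum _ hsum1 hsum2
      intro w
      have h1 := hlip z w
      have h2 : (ψ z - ψ w) ^ 2 ≤ 2 * ρ z w ^ 2 := by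
        have h3 : |ψ z - ψ w| ^ 2 ≤ (Real.sqrt 2 * ρ z w) ^ 2 :=
          pow_le_pow_left₀ (abs_nonneg _) h1 2
        rw [sq_abs] at h3
        have h4 : (Real.sqrt 2 * ρ z w) ^ 2 = 2 * ρ z w ^ 2 := by
          rw [mul_pow, Real.sq_sqrt (by norm_num : (0:ℝ) ≤ 2)]
        linarith
      exact mul_le_mul_of_nonneg_left h2 (hb_nonneg z w)
    have heq : ∑' w, b z w * (2 * ρ z w ^ 2) = 2 * ∑' w, b z w * ρ z w ^ 2 := by
      rw [← tsum_mul_left]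
      congr 1; ext w; ring
    have hint' := hint z
    have h2m : (0:ℝ) < 2 * m z := by have := hm_pos z; linarith
    have hfin : ∑' w, b z w * (ψ z - ψ w) ^ 2 ≤ 2 * m z := by
      rw [heq] at hle; linarith
    calc (2 * m z)⁻¹ * ∑' w, b z w * (ψ z - ψ w) ^ 2
        ≤ (2 * m z)⁻¹ * (2 * m z) :=
          mul_le_mul_of_nonneg_left hfin (inv_nonneg.mpr h2m.le)
      _ = 1 := inv_mul_cancel₀ h2m.ne'
  refine ⟨ψ, hsupp, hgamma, ?_⟩
  have hx : ψ x = Real.sqrt 2 * ρ x y := by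
    rw [hψdef]; simp only [hρ0 x, sub_zero, max_eq_left (hρnn x y)]
  have hy : ψ y = 0 := by
    rw [hψdef]; simp
  rw [hx, hy, sub_zero, abs_of_nonneg (mul_nonneg (Real.sqrt_nonneg 2) (hρnn x y))]

theorem stmt13 {X : Type*} [Countable X]
    (b : X → X → ℝ) (m : X → ℝ)
    (hb_nonneg : ∀ x y, 0 ≤ b x y) (hb_symm : ∀ x y, b x y = b y x)
    (hb_loop : ∀ x, b x x = 0)
    (hlf : ∀ x, (Function.support (b x)).Finite)
    (hm_pos : ∀ x, 0 < m x)
    (hconn : ∀ x y, Relation.ReflTransGen (fun u v => 0 < b u v) x y)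
    (S : ℝ) (hS : 0 < S) :
    ∀ x y : X, Real.sqrt 2 * rhoSFin b m S x y ≤ rhoE b m x y := by
  intro x y
  obtain ⟨C, hC⟩ := rhoE_bdd b m hb_nonneg hlf hm_pos (hconn x y)
  set B := {r | ∃ ψ : X → ℝ, (Function.support ψ).Finite ∧ (∀ z, gammaDensity b m ψ z ≤ 1) ∧
    r = |ψ x - ψ y|} with hBdef
  have hBbdd : BddAbove B := by
    refine ⟨C, fun r hr => ?_⟩
    obtain ⟨ψ, _, hψ, hrr⟩ := hr
    rw [hrr]; exact hC ψ hψ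
  have h0B : (0:ℝ) ∈ B := by
    refine ⟨0, by simp, fun z => ?_, by simp⟩
    unfold gammaDensity
    simp
  have hBnn : (0:ℝ) ≤ sSup B := le_csSup hBbdd h0B
  have hs2 : (0:ℝ) < Real.sqrt 2 := Real.sqrt_pos.mpr (by norm_num)
  have key : rhoSFin b m S x y ≤ sSup B / Real.sqrt 2 := by
    apply Real.sSup_le
    · rintro r ⟨ρ, hρ, hint, hjump, hfb, hr⟩
      obtain ⟨ψ, h1, h2, h3⟩ := mem_rhoE_set b m hb_nonneg hlf hm_pos ρ hρ hint hfb x y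
      have hmem : Real.sqrt 2 * ρ x y ∈ B := ⟨ψ, h1, h2, h3⟩
      have hle : Real.sqrt 2 * ρ x y ≤ sSup B := le_csSup hBbdd hmem
      rw [hr, le_div_iff₀ hs2]
      linarith [hle, mul_comm (ρ x y) (Real.sqrt 2)]
    · exact div_nonneg hBnn hs2.le
  have : Real.sqrt 2 * rhoSFin b m S x y ≤ Real.sqrt 2 * (sSup B / Real.sqrt 2) :=
    mul_le_mul_of_nonneg_left key hs2.le
  calc Real.sqrt 2 * rhoSFin b m S x y ≤ Real.sqrt 2 * (sSup B / Real.sqrt 2) := this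
    _ = sSup B := by field_simp
    _ = rhoE b m x y := rfl


end
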